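/- arXiv:1602.04601 — 5 statements merged into one kernel-verified Lean document; each statement's English description precedes it below -/
import Mathlib

section
/- Let τ_j ∈ ℝⁿ and let τ_{j'}, τ_{ℓ'} ∈ ℝⁿ have entries in {0,1} with τ_{ℓ'} ≤ τ_{j'} componentwise. Let η ∈ ℝⁿ. If Σ_{i : η_i < 0} τ_{j',i} η_i − τ_j·η ≥ 0, then (τ_{ℓ'} − τ_j)·η ≥ 0. -/
/-- first pruning condition for the minimization problem. -/
theorem stmt_6 {n : ℕ} (τj τj' τℓ' η : Fin n → ℝ)
    (hj'01 : ∀ i, τj' i = 0 ∨ τj' i = 1)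
    (hℓ'01 : ∀ i, τℓ' i = 0 ∨ τℓ' i = 1)
    (hle : ∀ i, τℓ' i ≤ τj' i)
    (h : (0:ℝ) ≤ (∑ i ∈ Finset.univ.filter (fun i => η i < 0), τj' i * η i)
          - ∑ i, τj i * η i) :
    (0:ℝ) ≤ ∑ i, (τℓ' i - τj i) * η i := by
  have key : (∑ i ∈ Finset.univ.filter (fun i => η i < 0), τj' i * η i)
      ≤ ∑ i, τℓ' i * η i := by
    rw [Finset.sum_filter]
    apply Finset.sum_le_sum
    intro i _
    by_cases hi : η i < 0
    · simp only [hi, if_true]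
      exact mul_le_mul_of_nonpos_right (hle i) hi.le
    · simp only [hi, if_false]
      have h0 : (0:ℝ) ≤ τℓ' i := by rcases hℓ'01 i with h | h <;> simp [h]
      exact mul_nonneg h0 (le_of_not_gt hi)
  have : ∑ i, (τℓ' i - τj i) * η i = (∑ i, τℓ' i * η i) - ∑ i, τj i * η i := by
    rw [← Finset.sum_sub_distrib]
    congr 1; ext i; ring
  linarith
end

section
/- Let y, η, τ_j ∈ ℝⁿ, let τ_{j'}, τ_{ℓ'} ∈ ℝⁿ have entries in {0,1} with τ_{ℓ'} ≤ τ_{j'} componentwise, and let θ̂ ∈ ℝ. Set a := τ_j·y − Σ_{i : y_i > 0} τ_{j',i} y_i and b := Σ_{i : η_i < 0} τ_{j',i} η_i − τ_j·η. Suppose a ≥ 0, b < 0, and a/b ≤ θ̂. Then, if (τ_{ℓ'} − τ_j)·η < 0, one has ((τ_j − τ_{ℓ'})·y) / ((τ_{ℓ'} − τ_j)·η) ≤ θ̂. -/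
/-- second pruning condition for the minimization problem. -/
theorem stmt_7 {n : ℕ} (y η τj τj' τℓ' : Fin n → ℝ)
    (hj'01 : ∀ i, τj' i = 0 ∨ τj' i = 1)
    (hℓ'01 : ∀ i, τℓ' i = 0 ∨ τℓ' i = 1)
    (hle : ∀ i, τℓ' i ≤ τj' i)
    (θhat : ℝ)
    (ha : (0:ℝ) ≤ (∑ i, τj i * y i)
          - ∑ i ∈ Finset.univ.filter (fun i => 0 < y i), τj' i * y i)
    (hb : ((∑ i ∈ Finset.univ.filter (fun i => η i < 0), τj' i * η i)
          - ∑ i, τj i * η i) < 0)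
    (hab : ((∑ i, τj i * y i)
            - ∑ i ∈ Finset.univ.filter (fun i => 0 < y i), τj' i * y i) /
           ((∑ i ∈ Finset.univ.filter (fun i => η i < 0), τj' i * η i)
            - ∑ i, τj i * η i) ≤ θhat) :
    (∑ i, (τℓ' i - τj i) * η i) < 0 →
      (∑ i, (τj i - τℓ' i) * y i) / (∑ i, (τℓ' i - τj i) * η i) ≤ θhat := by
  intro hD
  have hℓnn : ∀ i, (0:ℝ) ≤ τℓ' i := by
    intro i; rcases hℓ'01 i with h | h <;> rw [h] <;> norm_num
  -- numerator bound
  have keyN : ∑ i, τℓ' i * y i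
      ≤ ∑ i ∈ Finset.univ.filter (fun i => 0 < y i), τj' i * y i := by
    rw [← Finset.sum_filter_add_sum_filter_not Finset.univ (fun i => 0 < y i)
      (fun i => τℓ' i * y i)]
    have h1 : ∑ i ∈ Finset.univ.filter (fun i => 0 < y i), τℓ' i * y i
        ≤ ∑ i ∈ Finset.univ.filter (fun i => 0 < y i), τj' i * y i := by
      refine Finset.sum_le_sum fun i hi => ?_
      have hy : 0 < y i := (Finset.mem_filter.mp hi).2
      exact mul_le_mul_of_nonneg_right (hle i) hy.le
    have h2 : ∑ i ∈ Finset.univ.filter (fun i => ¬ 0 < y i), τℓ' i * y i ≤ 0 := by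
      refine Finset.sum_nonpos fun i hi => ?_
      have hy : y i ≤ 0 := le_of_not_gt (Finset.mem_filter.mp hi).2
      exact mul_nonpos_of_nonneg_of_nonpos (hℓnn i) hy
    linarith
  -- denominator bound
  have keyD : ∑ i ∈ Finset.univ.filter (fun i => η i < 0), τj' i * η i
      ≤ ∑ i, τℓ' i * η i := by
    rw [← Finset.sum_filter_add_sum_filter_not Finset.univ (fun i => η i < 0)
      (fun i => τℓ' i * η i)]
    have h1 : ∑ i ∈ Finset.univ.filter (fun i => η i < 0), τj' i * η i
        ≤ ∑ i ∈ Finset.univ.filter (fun i => η i < 0), τℓ' i * η i := by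
      refine Finset.sum_le_sum fun i hi => ?_
      have hη : η i < 0 := (Finset.mem_filter.mp hi).2
      exact mul_le_mul_of_nonpos_right (hle i) hη.le
    have h2 : 0 ≤ ∑ i ∈ Finset.univ.filter (fun i => ¬ η i < 0), τℓ' i * η i := by
      refine Finset.sum_nonneg fun i hi => ?_
      have hη : 0 ≤ η i := le_of_not_gt (Finset.mem_filter.mp hi).2
      exact mul_nonneg (hℓnn i) hη
    linarith
  have hNsum : ∑ i, (τj i - τℓ' i) * y i
      = (∑ i, τj i * y i) - ∑ i, τℓ' i * y i := by
    simp [sub_mul, Finset.sum_sub_distrib]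
  have hDsum : ∑ i, (τℓ' i - τj i) * η i
      = (∑ i, τℓ' i * η i) - ∑ i, τj i * η i := by
    simp [sub_mul, Finset.sum_sub_distrib]
  have hN : (∑ i, τj i * y i)
      - ∑ i ∈ Finset.univ.filter (fun i => 0 < y i), τj' i * y i
      ≤ ∑ i, (τj i - τℓ' i) * y i := by rw [hNsum]; linarith
  have hDle : (∑ i ∈ Finset.univ.filter (fun i => η i < 0), τj' i * η i)
      - ∑ i, τj i * η i ≤ ∑ i, (τℓ' i - τj i) * η i := by rw [hDsum]; linarith
  have hθb := (div_le_iff_of_neg hb).mp hab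
  rw [div_le_iff_of_neg hD]
  rcases le_or_gt 0 θhat with hθ | hθ
  · nlinarith
  · nlinarith
end

section
/- Let τ_j ∈ ℝⁿ and let τ_{j'}, τ_{ℓ'} ∈ ℝⁿ have entries in {0,1} with τ_{ℓ'} ≤ τ_{j'} componentwise. Let η ∈ ℝⁿ. If Σ_{i : η_i > 0} τ_{j',i} η_i − τ_j·η ≤ 0, then (τ_{ℓ'} − τ_j)·η ≤ 0. -/
/-- first pruning condition for the maximization problem. -/
theorem stmt_8 {n : ℕ} (τj τj' τℓ' η : Fin n → ℝ)
    (hj'01 : ∀ i, τj' i = 0 ∨ τj' i = 1)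
    (hℓ'01 : ∀ i, τℓ' i = 0 ∨ τℓ' i = 1)
    (hle : ∀ i, τℓ' i ≤ τj' i)
    (h : ((∑ i ∈ Finset.univ.filter (fun i => 0 < η i), τj' i * η i)
          - ∑ i, τj i * η i) ≤ 0) :
    (∑ i, (τℓ' i - τj i) * η i) ≤ 0 := by
  have key : ∑ i, τℓ' i * η i ≤
      ∑ i ∈ Finset.univ.filter (fun i => 0 < η i), τj' i * η i := by
    rw [← Finset.sum_filter_add_sum_filter_not Finset.univ (fun i => 0 < η i)
      (fun i => τℓ' i * η i)]
    have h1 : ∑ i ∈ Finset.univ.filter (fun i => 0 < η i), τℓ' i * η i ≤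
        ∑ i ∈ Finset.univ.filter (fun i => 0 < η i), τj' i * η i := by
      apply Finset.sum_le_sum
      intro i hi
      simp only [Finset.mem_filter] at hi
      exact mul_le_mul_of_nonneg_right (hle i) hi.2.le
    have h2 : ∑ i ∈ Finset.univ.filter (fun i => ¬ 0 < η i), τℓ' i * η i ≤ 0 := by
      apply Finset.sum_nonpos
      intro i hi
      simp only [Finset.mem_filter] at hi
      have : η i ≤ 0 := le_of_not_gt hi.2
      have hnn : 0 ≤ τℓ' i := by rcases hℓ'01 i with h | h <;> simp [h]
      exact mul_nonpos_of_nonneg_of_nonpos hnn this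
    linarith
  have : ∑ i, (τℓ' i - τj i) * η i = (∑ i, τℓ' i * η i) - ∑ i, τj i * η i := by
    rw [← Finset.sum_sub_distrib]
    apply Finset.sum_congr rfl
    intro i _; ring
  linarith
end

section
/- Let y, η, τ_j ∈ ℝⁿ, let τ_{j'}, τ_{ℓ'} ∈ ℝⁿ have entries in {0,1} with τ_{ℓ'} ≤ τ_{j'} componentwise, and let θ̂ ∈ ℝ. Set a := τ_j·y − Σ_{i : y_i > 0} τ_{j',i} y_i and b := Σ_{i : η_i > 0} τ_{j',i} η_i − τ_j·η. Suppose a ≥ 0, b > 0, and a/b ≥ θ̂. Then, if (τ_{ℓ'} − τ_j)·η > 0, one has ((τ_j − τ_{ℓ'})·y) / ((τ_{ℓ'} − τ_j)·η) ≥ θ̂. -/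
/-- Key bound: for a 0/1 vector `τℓ'` dominated by `τj'`, the full inner product
with any vector is at most the inner product of `τj'` over positive coordinates. -/
lemma aux_sum_le {n : ℕ} (v τj' τℓ' : Fin n → ℝ)
    (hℓ'01 : ∀ i, τℓ' i = 0 ∨ τℓ' i = 1)
    (hle : ∀ i, τℓ' i ≤ τj' i) :
    (∑ i, τℓ' i * v i) ≤ ∑ i ∈ Finset.univ.filter (fun i => 0 < v i), τj' i * v i := by
  rw [Finset.sum_filter]
  apply Finset.sum_le_sum
  intro i _
  by_cases h : 0 < v i
  · simp only [h, if_true]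
    exact mul_le_mul_of_nonneg_right (hle i) h.le
  · simp only [h, if_false]
    push_neg at h
    rcases hℓ'01 i with h0 | h1
    · simp [h0]
    · rw [h1, one_mul]; exact h

/-- second pruning condition for the maximization problem. -/
theorem stmt_9 {n : ℕ} (y η τj τj' τℓ' : Fin n → ℝ)
    (hj'01 : ∀ i, τj' i = 0 ∨ τj' i = 1)
    (hℓ'01 : ∀ i, τℓ' i = 0 ∨ τℓ' i = 1)
    (hle : ∀ i, τℓ' i ≤ τj' i)
    (θhat : ℝ)
    (ha : (0:ℝ) ≤ (∑ i, τj i * y i)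
          - ∑ i ∈ Finset.univ.filter (fun i => 0 < y i), τj' i * y i)
    (hb : (0:ℝ) < ((∑ i ∈ Finset.univ.filter (fun i => 0 < η i), τj' i * η i)
          - ∑ i, τj i * η i))
    (hab : θhat ≤ ((∑ i, τj i * y i)
            - ∑ i ∈ Finset.univ.filter (fun i => 0 < y i), τj' i * y i) /
           ((∑ i ∈ Finset.univ.filter (fun i => 0 < η i), τj' i * η i)
            - ∑ i, τj i * η i)) :
    (0:ℝ) < (∑ i, (τℓ' i - τj i) * η i) →
      θhat ≤ (∑ i, (τj i - τℓ' i) * y i) / (∑ i, (τℓ' i - τj i) * η i) := by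
  intro hden
  have hy := aux_sum_le y τj' τℓ' hℓ'01 hle
  have hη := aux_sum_le η τj' τℓ' hℓ'01 hle
  have hnum_eq : (∑ i, (τj i - τℓ' i) * y i)
      = (∑ i, τj i * y i) - ∑ i, τℓ' i * y i := by
    rw [← Finset.sum_sub_distrib]; congr 1; ext i; ring
  have hden_eq : (∑ i, (τℓ' i - τj i) * η i)
      = (∑ i, τℓ' i * η i) - ∑ i, τj i * η i := by
    rw [← Finset.sum_sub_distrib]; congr 1; ext i; ring
  have hnum_ge : ((∑ i, τj i * y i)
      - ∑ i ∈ Finset.univ.filter (fun i => 0 < y i), τj' i * y i)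
      ≤ ∑ i, (τj i - τℓ' i) * y i := by
    rw [hnum_eq]; linarith
  have hden_le : (∑ i, (τℓ' i - τj i) * η i)
      ≤ ((∑ i ∈ Finset.univ.filter (fun i => 0 < η i), τj' i * η i)
      - ∑ i, τj i * η i) := by
    rw [hden_eq]; linarith
  calc θhat ≤ _ := hab
    _ ≤ (∑ i, (τj i - τℓ' i) * y i) / (∑ i, (τℓ' i - τj i) * η i) :=
      div_le_div₀ (le_trans ha hnum_ge) hnum_ge hden hden_le
end

section
/- Let [J] be a finite index set, τ_j ∈ ℝⁿ for j ∈ [J], K ⊆ [J], and let Pol := {x ∈ ℝⁿ : (τ_j − τ_{j'})·x ≥ 0 for all j ∈ K and j' ∈ [J]\K}. Let y, η ∈ ℝⁿ with y ∈ Pol and η ≠ 0. Suppose both S₋ := {(j,j') ∈ K × ([J]\K) : (τ_{j'} − τ_j)·η < 0} and S₊ := {(j,j') ∈ K × ([J]\K) : (τ_{j'} − τ_j)·η > 0} are nonempty, and set θ_min := max_{(j,j') ∈ S₋} ((τ_j − τ_{j'})·y)/((τ_{j'} − τ_j)·η), θ_max := min_{(j,j') ∈ S₊} ((τ_j − τ_{j'})·y)/((τ_{j'}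 − τ_j)·η), L := η·y + θ_min‖η‖², U := η·y + θ_max‖η‖². Then for every x ∈ ℝⁿ whose orthogonal component agrees with that of y, i.e., x − ((η·x)/‖η‖²)η = y − ((η·y)/‖η‖²)η, one has x ∈ Pol if and only if L ≤ η·x ≤ U. -/
open Finset

/-- deterministic core of the polyhedral lemma. For any `x`
whose component orthogonal to `η` agrees with that of `y`, membership in the
selection polyhedron is equivalent to `L ≤ η·x ≤ U` with
`L = η·y + θ_min ‖η‖²` and `U = η·y + θ_max ‖η‖²`, where `θ_min` is the
maximum of the ratios over the pairs `S₋` with negative coefficient and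
`θ_max` the minimum of the ratios over the pairs `S₊` with positive
coefficient. -/
theorem stmt_13 {n : ℕ} {ι : Type*} [Fintype ι] [DecidableEq ι]
    (τ : ι → Fin n → ℝ) (K : Finset ι) (y η : Fin n → ℝ)
    (hy : ∀ j ∈ K, ∀ j' ∉ K, (0:ℝ) ≤ ∑ i, (τ j i - τ j' i) * y i)
    (hη : η ≠ 0)
    (Sm Sp : Finset (ι × ι))
    (hSmdef : Sm = (K ×ˢ Kᶜ).filter
        (fun p => (∑ i, (τ p.2 i - τ p.1 i) * η i) < 0))
    (hSpdef : Sp = (K ×ˢ Kᶜ).filter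
        (fun p => (0:ℝ) < ∑ i, (τ p.2 i - τ p.1 i) * η i))
    (hSm : Sm.Nonempty) (hSp : Sp.Nonempty)
    (x : Fin n → ℝ)
    (hx : (fun i => x i - ((∑ k, η k * x k) / (∑ k, η k * η k)) * η i)
        = (fun i => y i - ((∑ k, η k * y k) / (∑ k, η k * η k)) * η i)) :
    (∀ j ∈ K, ∀ j' ∉ K, (0:ℝ) ≤ ∑ i, (τ j i - τ j' i) * x i) ↔
      ((∑ k, η k * y k) +
          (Sm.sup' hSm
            (fun p => (∑ i, (τ p.1 i - τ p.2 i) * y i) /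
                      (∑ i, (τ p.2 i - τ p.1 i) * η i))) * (∑ k, η k * η k)
          ≤ ∑ k, η k * x k ∧
       (∑ k, η k * x k) ≤
        (∑ k, η k * y k) +
          (Sp.inf' hSp
            (fun p => (∑ i, (τ p.1 i - τ p.2 i) * y i) /
                      (∑ i, (τ p.2 i - τ p.1 i) * η i))) * (∑ k, η k * η k)) := by
  set c := ∑ k, η k * η k with hcdef
  have hcpos : 0 < c := by
    obtain ⟨k, hk⟩ : ∃ k, η k ≠ 0 := by
      by_contra h; push_neg at h; exact hη (funext h)
    exact Finset.sum_pos' (fun i _ => mul_self_nonneg _)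
      ⟨k, Finset.mem_univ k, mul_self_pos.mpr hk⟩
  set θ : ℝ := ((∑ k, η k * x k) - ∑ k, η k * y k) / c with hθdef
  have hxθ : ∀ i, x i = y i + θ * η i := by
    intro i
    have h := congrFun hx i
    have hc0 : c ≠ 0 := hcpos.ne'
    field_simp at h
    rw [hθdef]
    field_simp
    linarith
  have hηx : ∑ k, η k * x k = (∑ k, η k * y k) + θ * c := by
    have : θ * c = (∑ k, η k * x k) - ∑ k, η k * y k := by
      rw [hθdef]; field_simp
    linarith
  have key : ∀ j j', (∑ i, (τ j i - τ j' i) * x i)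
      = (∑ i, (τ j i - τ j' i) * y i) - θ * (∑ i, (τ j' i - τ j i) * η i) := by
    intro j j'
    rw [Finset.mul_sum, ← Finset.sum_sub_distrib]
    apply Finset.sum_congr rfl
    intro i _
    rw [hxθ i]; ring
  set f : ι × ι → ℝ := fun p => (∑ i, (τ p.1 i - τ p.2 i) * y i) /
      (∑ i, (τ p.2 i - τ p.1 i) * η i) with hfdef
  constructor
  · intro h
    have hsup : Sm.sup' hSm f ≤ θ := by
      apply Finset.sup'_le
      intro p hp
      rw [hSmdef, Finset.mem_filter] at hp
      obtain ⟨hmem, hneg⟩ := hp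
      obtain ⟨hp1, hp2⟩ := Finset.mem_product.mp hmem
      have hpol := h p.1 hp1 p.2 (Finset.mem_compl.mp hp2)
      rw [key p.1 p.2] at hpol
      rw [hfdef, div_le_iff_of_neg hneg]
      linarith
    have hinf : θ ≤ Sp.inf' hSp f := by
      apply Finset.le_inf'
      intro p hp
      rw [hSpdef, Finset.mem_filter] at hp
      obtain ⟨hmem, hpos⟩ := hp
      obtain ⟨hp1, hp2⟩ := Finset.mem_product.mp hmem
      have hpol := h p.1 hp1 p.2 (Finset.mem_compl.mp hp2)
      rw [key p.1 p.2] at hpol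
      rw [hfdef, le_div_iff₀ hpos]
      linarith
    constructor
    · rw [hηx]
      nlinarith [mul_le_mul_of_nonneg_right hsup hcpos.le]
    · rw [hηx]
      nlinarith [mul_le_mul_of_nonneg_right hinf hcpos.le]
  · rintro ⟨h1, h2⟩ j hj j' hj'
    rw [hηx] at h1 h2
    have hsupθ : Sm.sup' hSm f ≤ θ :=
      le_of_mul_le_mul_right (by linarith) hcpos
    have hθinf : θ ≤ Sp.inf' hSp f :=
      le_of_mul_le_mul_right (by linarith) hcpos
    rw [key j j']
    set b := ∑ i, (τ j' i - τ j i) * η i with hbdef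
    rcases lt_trichotomy b 0 with hb | hb | hb
    · have hmem : (j, j') ∈ Sm := by
        rw [hSmdef, Finset.mem_filter, Finset.mem_product]
        exact ⟨⟨hj, Finset.mem_compl.mpr hj'⟩, hb⟩
      have h3 : f (j, j') ≤ θ := le_trans (Finset.le_sup' f hmem) hsupθ
      rw [hfdef, div_le_iff_of_neg hb] at h3
      linarith
    · rw [hb]
      have := hy j hj j' hj'
      linarith
    · have hmem : (j, j') ∈ Sp := by
        rw [hSpdef, Finset.mem_filter, Finset.mem_product]
        exact ⟨⟨hj, Finset.mem_compl.mpr hj'⟩, hb⟩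
      have h3 : θ ≤ f (j, j') := le_trans hθinf (Finset.inf'_le f hmem)
      rw [hfdef, le_div_iff₀ hb] at h3
      linarith
end
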